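/- Let Δ > 0, ε₁, ε₂ > 0, T ∈ ℝ, and let a, b be real sequences with |a_i − b_i| ≤ Δ for all i. Let P_a(k) (respectively P_b(k)) be the probability, under independent noise v₀ drawn from the exponential distribution of scale Δ/ε₁ and v₁, …, v_k each drawn from the exponential distribution of scale Δ/ε₂, of the event {a_i + v_i < T + v₀ for all 1 ≤ i ≤ k−1, and a_k + v_k ≥ T + v₀} (with b in place of a for P_b(k)). Then for every k ≥ 1, P_a(k) ≤ exp(ε₁ + 2ε₂)·P_b(k); and if moreover a, b are monotonic (a_i ≥ b_i for all i or a_i ≤ b_i for all i), then P_a(k) ≤ exp(ε₁ + ε₂)·P_b(k). (AboveThreshold with exponential noise is (ε₁+2ε₂)-DP for general queries and (ε₁+ε₂)-DP for monotonic queries.) -/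

import Mathlib

open MeasureTheory Real

/-- The exponential distribution with scale `b`: density `z ↦ (1/b)·exp(−z/b)` for `z ≥ 0`
(and `0` for `z < 0`) with respect to Lebesgue measure. -/
noncomputable def expDist (b : ℝ) : Measure ℝ :=
  volume.withDensity fun z =>
    ENNReal.ofReal (if 0 ≤ z then (1 / b) * Real.exp (-(z / b)) else 0)

/-- The event that `AboveThreshold` with threshold `T` and query values `a 1, a 2, …` halts
exactly at query `k`: coordinates `v 0, v 1, …, v k` are the noise on the threshold and on
queries `1, …, k`. -/
def haltEvent (T : ℝ) (a : ℕ → ℝ) (k : ℕ) : Set (Fin (k + 1) → ℝ) :=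
  {v | (∀ i : Fin (k + 1), 1 ≤ (i : ℕ) → (i : ℕ) < k → a i + v i < T + v 0) ∧
       T + v 0 ≤ a k + v (Fin.last k)}

noncomputable def gdens (s : ℝ) (z : ℝ) : ENNReal :=
  ENNReal.ofReal (if 0 ≤ z then (1 / s) * Real.exp (-(z / s)) else 0)

lemma gdens_meas (s : ℝ) : Measurable (gdens s) := by
  apply Measurable.ennreal_ofReal
  exact Measurable.ite (measurableSet_le measurable_const measurable_id)
    (measurable_const.mul (Real.measurable_exp.comp (measurable_id.div_const s).neg))
    measurable_const

lemma gdens_le_shift {s c : ℝ} (hc : 0 ≤ c) (z : ℝ) :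
    gdens s z ≤ ENNReal.ofReal (Real.exp (c / s)) * gdens s (z + c) := by
  unfold gdens
  by_cases hz : 0 ≤ z
  · rw [if_pos hz, if_pos (by linarith), ← ENNReal.ofReal_mul (Real.exp_pos _).le]
    apply ENNReal.ofReal_le_ofReal
    apply le_of_eq
    have harg : -(z / s) = c / s + -((z + c) / s) := by ring
    rw [harg, Real.exp_add]
    ring
  · rw [if_neg hz]
    simp

instance gdens_sigmaFinite (s : ℝ) : SigmaFinite ((volume : Measure ℝ).withDensity (gdens s)) := by
  unfold gdens
  infer_instance

lemma lintegral_pi_prod {n : ℕ} (μ : Fin n → Measure ℝ) [∀ i, SigmaFinite (μ i)]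
    (f : Fin n → ℝ → ENNReal) (hf : ∀ i, Measurable (f i)) :
    ∫⁻ v, ∏ i, f i (v i) ∂Measure.pi μ = ∏ i, ∫⁻ x, f i x ∂μ i := by
  induction n with
  | zero =>
      simp [Measure.pi_of_empty, lintegral_dirac]
  | succ n ih =>
      have hm := (measurePreserving_piFinSuccAbove μ 0).symm
      have hG : Measurable fun v : Fin (n + 1) → ℝ => ∏ i, f i (v i) :=
        Finset.measurable_prod _ fun i _ => (hf i).comp (measurable_pi_apply i)
      rw [← hm.map_eq, lintegral_map hG (MeasurableEquiv.measurable _)]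
      simp_rw [MeasurableEquiv.piFinSuccAbove_symm_apply, Fin.insertNthEquiv,
        Fin.prod_univ_succ, Equiv.coe_fn_mk, Fin.insertNth_zero, Fin.cons_zero, Fin.cons_succ,
        Fin.zero_succAbove, cast_eq]
      rw [lintegral_prod_mul (f := f 0) (g := fun y : Fin n → ℝ => ∏ x : Fin n, f x.succ (y x))
        ((hf 0).aemeasurable)
        ((Finset.measurable_prod _ fun (i : Fin n) _ =>
          (hf i.succ).comp (measurable_pi_apply i)).aemeasurable)]
      rw [ih (fun i => μ i.succ) (fun i => f i.succ) (fun i => hf i.succ)]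

lemma pi_withDensity {n : ℕ} (F : Fin n → ℝ → ENNReal) (hF : ∀ i, Measurable (F i))
    [∀ i, SigmaFinite ((volume : Measure ℝ).withDensity (F i))] :
    Measure.pi (fun i => (volume : Measure ℝ).withDensity (F i)) =
      (volume : Measure (Fin n → ℝ)).withDensity fun v => ∏ i, F i (v i) := by
  refine Measure.pi_eq fun s hs => ?_
  rw [withDensity_apply _ (MeasurableSet.univ_pi hs),
    ← lintegral_indicator (MeasurableSet.univ_pi hs) _]
  have hind : ∀ v : Fin n → ℝ, (Set.pi Set.univ s).indicator (fun v => ∏ i, F i (v i)) v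
      = ∏ i, (s i).indicator (F i) (v i) := by
    intro v
    by_cases hv : v ∈ Set.pi Set.univ s
    · rw [Set.indicator_of_mem hv]
      exact Finset.prod_congr rfl fun i _ => (Set.indicator_of_mem (hv i trivial) _).symm
    · rw [Set.indicator_of_notMem hv]
      rw [Set.mem_univ_pi, not_forall] at hv
      obtain ⟨i, hi⟩ := hv
      exact (Finset.prod_eq_zero (Finset.mem_univ i)
        (by simp [Set.indicator_of_notMem hi])).symm
  simp_rw [hind]
  rw [volume_pi, lintegral_pi_prod _ _ (fun i => (hF i).indicator (hs i))]
  exact Finset.prod_congr rfl fun i _ => by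
    rw [lintegral_indicator (hs i) _, withDensity_apply _ (hs i)]

lemma pi_shift {n : ℕ} (F : Fin n → ℝ → ENNReal) (hF : ∀ i, Measurable (F i))
    [∀ i, SigmaFinite ((volume : Measure ℝ).withDensity (F i))]
    (c : Fin n → ℝ) (e : Fin n → ℝ) (he : ∀ i, 0 ≤ e i)
    (hshift : ∀ i z, F i z ≤ ENNReal.ofReal (e i) * F i (z + c i))
    {A B : Set (Fin n → ℝ)} (hA : MeasurableSet A)
    (hAB : ∀ v ∈ A, v + c ∈ B) :
    Measure.pi (fun i => (volume : Measure ℝ).withDensity (F i)) A ≤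
      ENNReal.ofReal (∏ i, e i) *
        Measure.pi (fun i => (volume : Measure ℝ).withDensity (F i)) B := by
  have hmeasc : Measurable fun v : Fin n → ℝ => ∏ i, F i (v i + c i) :=
    Finset.measurable_prod _ fun i _ =>
      (hF i).comp ((measurable_pi_apply i).add measurable_const)
  have hmeas : Measurable fun v : Fin n → ℝ => ∏ i, F i (v i) :=
    Finset.measurable_prod _ fun i _ => (hF i).comp (measurable_pi_apply i)
  set μ := Measure.pi (fun i => (volume : Measure ℝ).withDensity (F i)) with hμ
  set A' : Set (Fin n → ℝ) := (fun v => v - c) ⁻¹' A with hA'def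
  have hA' : MeasurableSet A' := hA.preimage (measurable_id.sub measurable_const)
  have hsub : A' ⊆ B := by
    intro w hw
    have h2 := hAB _ hw
    simpa using h2
  have key : ∀ v : Fin n → ℝ, A.indicator (fun v => ∏ i, F i (v i + c i)) v
      = A'.indicator (fun v => ∏ i, F i (v i)) (v + c) := by
    intro v
    have hmem : v + c ∈ A' ↔ v ∈ A := by simp [hA'def]
    by_cases hv : v ∈ A
    · rw [Set.indicator_of_mem hv, Set.indicator_of_mem (hmem.mpr hv)]
      rfl
    · rw [Set.indicator_of_notMem hv, Set.indicator_of_notMem (fun h => hv (hmem.mp h))]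
  calc μ A = ∫⁻ v in A, ∏ i, F i (v i) ∂volume := by
        rw [hμ, pi_withDensity F hF, withDensity_apply _ hA]
    _ ≤ ∫⁻ v in A, ENNReal.ofReal (∏ i, e i) * ∏ i, F i (v i + c i) ∂volume := by
        refine setLIntegral_mono (hmeasc.const_mul _) fun v _ => ?_
        calc ∏ i, F i (v i) ≤ ∏ i, (ENNReal.ofReal (e i) * F i (v i + c i)) :=
              Finset.prod_le_prod' fun i _ => hshift i (v i)
          _ = ENNReal.ofReal (∏ i, e i) * ∏ i, F i (v i + c i) := by
              rw [Finset.prod_mul_distrib, ← ENNReal.ofReal_prod_of_nonneg fun i _ => he i]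
    _ = ENNReal.ofReal (∏ i, e i) * ∫⁻ v in A, ∏ i, F i (v i + c i) ∂volume :=
        lintegral_const_mul _ hmeasc
    _ = ENNReal.ofReal (∏ i, e i) * μ A' := by
        congr 1
        rw [← lintegral_indicator hA _]
        simp_rw [key]
        rw [lintegral_add_right_eq_self (fun v => A'.indicator (fun w => ∏ i, F i (w i)) v) c]
        rw [lintegral_indicator hA' _, hμ, pi_withDensity F hF, withDensity_apply _ hA']
    _ ≤ ENNReal.ofReal (∏ i, e i) * μ B := mul_le_mul_right (measure_mono hsub) _

lemma expDist_eq (t : ℝ) : expDist t = (volume : Measure ℝ).withDensity (gdens t) := rfl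

lemma haltEvent_measurable (T : ℝ) (a : ℕ → ℝ) (k : ℕ) :
    MeasurableSet (haltEvent T a k) := by
  have h1 : MeasurableSet {v : Fin (k+1) → ℝ |
      ∀ i : Fin (k+1), 1 ≤ (i:ℕ) → (i:ℕ) < k → a i + v i < T + v 0} := by
    rw [Set.setOf_forall]
    refine MeasurableSet.iInter fun i => ?_
    by_cases h1i : 1 ≤ (i:ℕ)
    · by_cases h2i : (i:ℕ) < k
      · simp only [h1i, h2i, forall_true_left]
        exact measurableSet_lt (measurable_const.add (measurable_pi_apply i))
          (measurable_const.add (measurable_pi_apply 0))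
      · simp [h2i]
    · simp [h1i]
  have h2 : MeasurableSet {v : Fin (k+1) → ℝ | T + v 0 ≤ a k + v (Fin.last k)} :=
    measurableSet_le (measurable_const.add (measurable_pi_apply 0))
      (measurable_const.add (measurable_pi_apply (Fin.last k)))
  exact h1.inter h2

lemma halt_core (Δ ε₁ ε₂ T : ℝ) (hΔ : 0 < Δ) (hε₁ : 0 < ε₁) (hε₂ : 0 < ε₂)
    (a b : ℕ → ℝ) (c0 ck : ℝ) (h0 : 0 ≤ c0) (hck : 0 ≤ ck)
    (k : ℕ) (hk : 1 ≤ k)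
    (hmid : ∀ i : ℕ, b i ≤ a i + c0)
    (hlast : a k + c0 ≤ b k + ck) :
    Measure.pi (fun i : Fin (k + 1) => if i = 0 then expDist (Δ / ε₁) else expDist (Δ / ε₂))
        (haltEvent T a k) ≤
      ENNReal.ofReal (Real.exp (c0 * ε₁ / Δ + ck * ε₂ / Δ)) *
        Measure.pi (fun i : Fin (k + 1) => if i = 0 then expDist (Δ / ε₁) else expDist (Δ / ε₂))
          (haltEvent T b k) := by
  have hlast0 : Fin.last k ≠ (0 : Fin (k+1)) := by
    intro h
    have := congrArg Fin.val h
    simp [Fin.last] at this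
    omega
  set s : Fin (k+1) → ℝ := fun i => if i = 0 then Δ / ε₁ else Δ / ε₂ with hs
  set c : Fin (k+1) → ℝ := fun i => if i = 0 then c0 else if i = Fin.last k then ck else 0 with hc
  have hcnn : ∀ i, 0 ≤ c i := by
    intro i
    simp only [hc]
    split_ifs <;> simp [h0, hck]
  have hmeq : (fun i : Fin (k+1) => if i = 0 then expDist (Δ/ε₁) else expDist (Δ/ε₂))
      = fun i => (volume : Measure ℝ).withDensity (gdens (s i)) := by
    funext i
    by_cases hi : i = 0 <;> simp [hi, hs, expDist_eq]
  rw [hmeq]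
  have hbound := pi_shift (fun i => gdens (s i)) (fun i => gdens_meas (s i)) c
    (fun i => Real.exp (c i / s i)) (fun i => (Real.exp_pos _).le)
    (fun i z => gdens_le_shift (hcnn i) z)
    (haltEvent_measurable T a k)
    (B := haltEvent T b k) ?_
  · refine le_trans hbound (le_of_eq ?_)
    congr 1
    rw [← Real.exp_sum]
    congr 1
    have hterm : ∀ i : Fin (k+1), c i / s i =
        (if i = 0 then c0 * ε₁ / Δ else 0) + (if i = Fin.last k then ck * ε₂ / Δ else 0) := by
      intro i
      by_cases hi : i = 0
      · subst hi
        have h1 : c 0 = c0 := by simp [hc]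
        have h2 : s 0 = Δ / ε₁ := by simp [hs]
        rw [h1, h2, if_pos rfl, if_neg (Ne.symm hlast0), add_zero, div_div_eq_mul_div]
      · by_cases hil : i = Fin.last k
        · subst hil
          have h1 : c (Fin.last k) = ck := by simp [hc, hlast0]
          have h2 : s (Fin.last k) = Δ / ε₂ := by simp [hs, hlast0]
          rw [h1, h2, if_neg hlast0, if_pos rfl, zero_add, div_div_eq_mul_div]
        · have h1 : c i = 0 := by simp [hc, hi, hil]
          rw [h1, if_neg hi, if_neg hil, zero_div, add_zero]
    simp_rw [hterm]
    rw [Finset.sum_add_distrib]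
    simp [Finset.sum_ite_eq']
  · rintro v ⟨hlt, hge⟩
    have hc0 : c 0 = c0 := by simp [hc]
    have hcl : c (Fin.last k) = ck := by simp [hc, hlast0]
    have hv0 : (v + c) 0 = v 0 + c0 := by rw [Pi.add_apply, hc0]
    have hvl : (v + c) (Fin.last k) = v (Fin.last k) + ck := by rw [Pi.add_apply, hcl]
    constructor
    · intro i h1i h2i
      have hi0 : i ≠ 0 := by
        intro h; subst h; simp at h1i
      have hil : i ≠ Fin.last k := by
        intro h; subst h; simp [Fin.last] at h2i
      have hci : c i = 0 := by simp [hc, hi0, hil]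
      have hvi : (v + c) i = v i := by rw [Pi.add_apply, hci, add_zero]
      rw [hvi, hv0]
      have h3 := hlt i h1i h2i
      have h4 := hmid (i : ℕ)
      linarith
    · rw [hvl, hv0]
      linarith

/-- `AboveThreshold` with exponential noise is `(ε₁+2ε₂)`-DP for general sensitivity-`Δ`
queries, and `(ε₁+ε₂)`-DP for monotonic queries. -/
theorem expo_aboveThreshold_dp (Δ ε₁ ε₂ T : ℝ) (hΔ : 0 < Δ) (hε₁ : 0 < ε₁) (hε₂ : 0 < ε₂)
    (a b : ℕ → ℝ) (hsens : ∀ i : ℕ, |a i - b i| ≤ Δ) :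
    (∀ k : ℕ, 1 ≤ k →
      Measure.pi (fun i : Fin (k + 1) => if i = 0 then expDist (Δ / ε₁) else expDist (Δ / ε₂))
          (haltEvent T a k) ≤
        ENNReal.ofReal (Real.exp (ε₁ + 2 * ε₂)) *
          Measure.pi
            (fun i : Fin (k + 1) => if i = 0 then expDist (Δ / ε₁) else expDist (Δ / ε₂))
            (haltEvent T b k)) ∧
    ((∀ i : ℕ, b i ≤ a i) ∨ (∀ i : ℕ, a i ≤ b i) →
      ∀ k : ℕ, 1 ≤ k →
        Measure.pi (fun i : Fin (k + 1) => if i = 0 then expDist (Δ / ε₁) else expDist (Δ / ε₂))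
            (haltEvent T a k) ≤
          ENNReal.ofReal (Real.exp (ε₁ + ε₂)) *
            Measure.pi
              (fun i : Fin (k + 1) => if i = 0 then expDist (Δ / ε₁) else expDist (Δ / ε₂))
              (haltEvent T b k)) := by
  constructor
  · intro k hk
    have h := halt_core Δ ε₁ ε₂ T hΔ hε₁ hε₂ a b Δ (2 * Δ) hΔ.le (by linarith) k hk
      (fun i => by have := abs_le.mp (hsens i); linarith)
      (by have := abs_le.mp (hsens k); linarith)
    have hexp : Δ * ε₁ / Δ + 2 * Δ * ε₂ / Δ = ε₁ + 2 * ε₂ := by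
      field_simp
    rwa [hexp] at h
  · intro hmono k hk
    rcases hmono with hba | hab
    · have h := halt_core Δ ε₁ ε₂ T hΔ hε₁ hε₂ a b 0 Δ le_rfl hΔ.le k hk
        (fun i => by have := hba i; linarith)
        (by have := abs_le.mp (hsens k); linarith)
      have hexp : 0 * ε₁ / Δ + Δ * ε₂ / Δ = ε₂ := by
        field_simp
        ring
      ring
      rw [hexp] at h
      refine h.trans (mul_le_mul_left
        (ENNReal.ofReal_le_ofReal (Real.exp_le_exp.mpr (by linarith))) _)
    · have h := halt_core Δ ε₁ ε₂ T hΔ hε₁ hε₂ a b Δ Δ hΔ.le hΔ.le k hk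
        (fun i => by have := abs_le.mp (hsens i); linarith)
        (by have := hab k; linarith)
      have hexp : Δ * ε₁ / Δ + Δ * ε₂ / Δ = ε₁ + ε₂ := by
        field_simp
      ring
      rwa [hexp] at h
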